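/- arXiv:2401.00925 — 4 statements merged into one kernel-verified Lean document; each statement's English description precedes it below -/
import Mathlib

section
/- Let (T,m) be a complete local ring, p a nonmaximal prime ideal of T, (R, R∩m) a p-subring of T, and set C = {p} ∪ Ass(T). If x ∈ T is such that for every q ∈ C the image x + q ∈ T/q is transcendental over R/(R ∩ q) ≅ R, then S = R[x]_{(R[x] ∩ m)} is a p-subring of T. Moreover, if R is finite then S is countably infinite, while if R is infinite then |S| = |R|. -/
open IsLocalRing

/-- The `q`-th Frobenius power `I^{[q]}` of an ideal: the ideal generated by `q`-th powers of
elements of `I`. -/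
def Ideal.frobPow {R : Type*} [CommRing R] (I : Ideal R) (q : ℕ) : Ideal R :=
  Ideal.span ((fun r => r ^ q) '' (I : Set R))

/-- Membership in the tight closure `I*` of an ideal `I` in a ring of characteristic `p`:
there is a `c` outside every minimal prime with `c * x^{p^e} ∈ I^{[p^e]}` for all `e ≫ 0`. -/
def Ideal.MemTightClosure {R : Type*} [CommRing R] (p : ℕ) (I : Ideal R) (x : R) : Prop :=
  ∃ c : R, (∀ P ∈ minimalPrimes R, c ∉ P) ∧
    ∃ E : ℕ, ∀ e : ℕ, E ≤ e → c * x ^ p ^ e ∈ I.frobPow (p ^ e)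

/-- A ring of characteristic `p` is weakly F-regular if every ideal is tightly closed. -/
def WeaklyFRegular (R : Type*) [CommRing R] (p : ℕ) : Prop :=
  ∀ (I : Ideal R) (x : R), I.MemTightClosure p x → x ∈ I

/-- A ring is F-regular if all of its localizations are weakly F-regular. -/
def FRegular (R : Type*) [CommRing R] (p : ℕ) : Prop :=
  ∀ S : Submonoid R, WeaklyFRegular (Localization S) p

/-- A ring is catenary if any two saturated chains of primes with the same endpoints have
the same length. -/
def IsCatenaryRing (R : Type*) [CommRing R] : Prop :=
  ∀ (n m : ℕ) (f : Fin (n + 1) → PrimeSpectrum R) (g : Fin (m + 1) → PrimeSpectrum R),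
    f 0 = g 0 → f (Fin.last n) = g (Fin.last m) →
    (∀ i : Fin n, f i.castSucc ⋖ f i.succ) → (∀ i : Fin m, g i.castSucc ⋖ g i.succ) →
    n = m

/-- `y` generates the socle of `T/I`, i.e. `(I : m) = I + (y)` and `y ∉ I`. -/
def IsSocleGenerator {T : Type*} [CommRing T] [IsLocalRing T] (I : Ideal T) (y : T) : Prop :=
  y ∉ I ∧ I.colon (maximalIdeal T) = I ⊔ Ideal.span {y}

/-- An approximately Gorenstein sequence: a descending chain of `m`-primary ideals with
Gorenstein quotients, cofinal with the powers of `m`. -/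
def IsApproxGorensteinSeq (T : Type*) [CommRing T] [IsLocalRing T] (I : ℕ → Ideal T) : Prop :=
  Antitone I ∧ (∀ s, (I s).radical = maximalIdeal T) ∧
  (∀ s, ∃ y, IsSocleGenerator (I s) y) ∧
  ∀ N : ℕ, ∃ S : ℕ, ∀ s : ℕ, S ≤ s → I s ≤ maximalIdeal T ^ N

/-- The set `M_{I,y} = ⋃_{e ≥ 1} ⋂_{f ≥ e} (I^{[p^f]} : y^{p^f})`. -/
def MIy {T : Type*} [CommRing T] (p : ℕ) (I : Ideal T) (y : T) : Set T :=
  {c : T | ∃ e : ℕ, 1 ≤ e ∧ ∀ f : ℕ, e ≤ f → c * y ^ p ^ f ∈ I.frobPow (p ^ f)}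

/-- `depth T ≥ n`: there is a regular sequence of length `n` in the maximal ideal. -/
def DepthGE (T : Type*) [CommRing T] [IsLocalRing T] (n : ℕ) : Prop :=
  ∃ rs : List T, rs.length = n ∧ (∀ x ∈ rs, x ∈ maximalIdeal T) ∧
    RingTheory.Sequence.IsRegular T rs

/-- A Noetherian local ring is Cohen–Macaulay iff there is a regular sequence in the maximal
ideal of length equal to the Krull dimension. -/
def IsCohenMacaulayLocal (T : Type*) [CommRing T] [IsLocalRing T] : Prop :=
  ∃ rs : List T, (∀ x ∈ rs, x ∈ maximalIdeal T) ∧ RingTheory.Sequence.IsRegular T rs ∧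
    (rs.length : WithBot (WithTop ℕ)) = ringKrullDim T

/-- A parameter ideal: generated by `dim T` elements, with radical the maximal ideal. -/
def IsParameterIdeal (T : Type*) [CommRing T] [IsLocalRing T] (I : Ideal T) : Prop :=
  ∃ (n : ℕ) (x : Fin n → T), I = Ideal.span (Set.range x) ∧ I.radical = maximalIdeal T ∧
    (n : WithBot (WithTop ℕ)) = ringKrullDim T

/-- A Noetherian local ring is Gorenstein iff it is Cohen–Macaulay and every parameter ideal
is irreducible (has one-dimensional socle). -/
def IsGorensteinLocal (T : Type*) [CommRing T] [IsLocalRing T] : Prop :=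
  IsCohenMacaulayLocal T ∧ ∀ I : Ideal T, IsParameterIdeal T I → ∃ y, IsSocleGenerator I y

/-- A `p`-subring of a local ring `T`: a quasi-local subring `(R, R ∩ m)` which is small,
misses `p`, and misses every associated prime of `T`. -/
def IsPSubring (T : Type*) [CommRing T] [IsLocalRing T] (P : Ideal T) (R : Subring T) : Prop :=
  IsLocalRing R ∧ (Ideal.comap R.subtype (maximalIdeal T)).IsMaximal ∧
  (Cardinal.mk R ≤ max Cardinal.aleph0 (Cardinal.mk (ResidueField T)) ∧
    (Cardinal.mk R = max Cardinal.aleph0 (Cardinal.mk (ResidueField T)) →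
      Cardinal.mk (ResidueField T) ≤ Cardinal.aleph0)) ∧
  Ideal.comap R.subtype P = ⊥ ∧
  ∀ Q ∈ associatedPrimes T T, Ideal.comap R.subtype Q = ⊥

/-- An N-subring of a local ring `T`: a quasi-local UFD `(R, R ∩ m)` inside `T` which is small,
misses every associated prime of `T`, and such that `R ∩ J` has height at most one for every
`J ∈ Ass(T/tT)`, `t` a nonzerodivisor. -/
def IsNSubring (T : Type*) [CommRing T] [IsLocalRing T] (R : Subring T) : Prop :=
  IsLocalRing R ∧ (Ideal.comap R.subtype (maximalIdeal T)).IsMaximal ∧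
  (∃ _ : IsDomain R, UniqueFactorizationMonoid R) ∧
  (Cardinal.mk R ≤ max Cardinal.aleph0 (Cardinal.mk (ResidueField T)) ∧
    (Cardinal.mk R = max Cardinal.aleph0 (Cardinal.mk (ResidueField T)) →
      Cardinal.mk (ResidueField T) ≤ Cardinal.aleph0)) ∧
  (∀ Q ∈ associatedPrimes T T, Ideal.comap R.subtype Q = ⊥) ∧
  ∀ t ∈ nonZeroDivisors T, ∀ J ∈ associatedPrimes T (T ⧸ Ideal.span {t}),
    ∀ q0 q1 : Ideal R, q0.IsPrime → q1.IsPrime →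
      ¬(q0 < q1 ∧ q1 < Ideal.comap R.subtype J)

/-!
With `A = R[x]`, the ring `S` is the localization of `A` at `A ∩ m`. Since the denominators are
units of `T`, an element of `S` lies in an ideal `Q` only if its numerator does, and transcendence
of `x` modulo `Q` forces `A ∩ Q = 0`; so `S` misses `P` and every associated prime. Transcendence
modulo `P` also makes `x` transcendental over `R`, whence `A ≅ R[X]` and
`|S| = |A| = max(|R|, ℵ₀)`, and the size condition on a `p`-subring survives replacing `|R|` by
`max(|R|, ℵ₀)`.
-/

open Cardinal Polynomial

namespace Cardinal

def IsPSubringBound (r k : Cardinal) : Prop :=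
  r ≤ max ℵ₀ k ∧ (r = max ℵ₀ k → k ≤ ℵ₀)

theorem IsPSubringBound.max_aleph0 {r k : Cardinal} (h : IsPSubringBound r k) :
    IsPSubringBound (max r ℵ₀) k := by
  refine ⟨max_le h.1 (le_max_left _ _), fun hrk => ?_⟩
  rcases le_total ℵ₀ r with hr | hr
  · exact h.2 (by rwa [max_eq_left hr] at hrk)
  · rw [max_eq_right hr] at hrk
    exact (le_max_right ℵ₀ k).trans hrk.ge

end Cardinal

section Adjoin

variable {R T : Type*} [CommRing R] [CommRing T] [Algebra R T] {x : T}

theorem Transcendental.eq_zero_of_mem_adjoin_of_mem {Q : Ideal T}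
    (hx : Transcendental R (Ideal.Quotient.mk Q x)) {a : T} (ha : a ∈ Algebra.adjoin R {x})
    (haQ : a ∈ Q) : a = 0 := by
  rw [Algebra.adjoin_singleton_eq_range_aeval] at ha
  obtain ⟨f, rfl⟩ := ha
  have hf : Polynomial.aeval (Ideal.Quotient.mk Q x) f = 0 := by
    rw [← Ideal.Quotient.mkₐ_eq_mk R, aeval_algHom_apply, Ideal.Quotient.mkₐ_eq_mk]
    exact Ideal.Quotient.eq_zero_iff_mem.mpr haQ
  rw [transcendental_iff.mp hx f hf, map_zero]

theorem Transcendental.of_quotient {Q : Ideal T} (hx : Transcendental R (Ideal.Quotient.mk Q x)) :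
    Transcendental R x :=
  fun h => hx (h.algHom (Ideal.Quotient.mkₐ R Q))

end Adjoin

universe u in
theorem Transcendental.cardinalMk_adjoin {R T : Type u} [CommRing R] [Nontrivial R] [CommRing T]
    [Algebra R T] {x : T} (hx : Transcendental R x) :
    #(Algebra.adjoin R {x}) = max #R ℵ₀ := by
  rw [Algebra.adjoin_singleton_eq_range_aeval, ← cardinalMk_eq_max]
  exact mk_range_eq _ (transcendental_iff_injective.mp hx)

theorem Subring.closure_union_singleton_eq_adjoin {T : Type*} [CommRing T] (R : Subring T)
    (x : T) : Subring.closure ((R : Set T) ∪ {x}) = (Algebra.adjoin R {x}).toSubring := by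
  rw [Algebra.adjoin_eq_ring_closure, Algebra.algebraMap_ofSubring, Subring.coe_subtype,
    Subtype.range_coe]

namespace Subring

variable {T : Type*} [CommRing T] [IsLocalRing T] (A : Subring T)

/-- The localization `A_(A ∩ m)`, realized inside `T` as the fractions `a / b` with `b` a unit
of `T`. -/
def localizeAtMaximal : Subring T where
  carrier := {t | ∃ a ∈ A, ∃ b ∈ A, b ∉ maximalIdeal T ∧ b * t = a}
  zero_mem' := ⟨0, A.zero_mem, 1, A.one_mem, (maximalIdeal T).one_notMem, mul_zero 1⟩
  one_mem' := ⟨1, A.one_mem, 1, A.one_mem, (maximalIdeal T).one_notMem, mul_one 1⟩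
  add_mem' := by
    rintro s t ⟨a, ha, b, hb, hbm, rfl⟩ ⟨c, hc, d, hd, hdm, rfl⟩
    exact ⟨d * (b * s) + b * (d * t), add_mem (mul_mem hd ha) (mul_mem hb hc), b * d,
      mul_mem hb hd, (maximalIdeal.isMaximal T).isPrime.mul_notMem hbm hdm, by ring⟩
  mul_mem' := by
    rintro s t ⟨a, ha, b, hb, hbm, rfl⟩ ⟨c, hc, d, hd, hdm, rfl⟩
    exact ⟨b * s * (d * t), mul_mem ha hc, b * d, mul_mem hb hd,
      (maximalIdeal.isMaximal T).isPrime.mul_notMem hbm hdm, by ring⟩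
  neg_mem' := by
    rintro t ⟨a, ha, b, hb, hbm, rfl⟩
    exact ⟨-(b * t), neg_mem ha, b, hb, hbm, by ring⟩

variable {A}

theorem le_localizeAtMaximal : A ≤ A.localizeAtMaximal :=
  fun a ha => ⟨a, ha, 1, A.one_mem, (maximalIdeal T).one_notMem, one_mul a⟩

theorem isUnit_localizeAtMaximal_of_notMem {t : A.localizeAtMaximal}
    (ht : (t : T) ∉ maximalIdeal T) : IsUnit t := by
  obtain ⟨a, ha, b, hb, hbm, hab⟩ := t.2
  have ham : a ∉ maximalIdeal T := hab ▸ (maximalIdeal.isMaximal T).isPrime.mul_notMem hbm ht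
  obtain ⟨u, rfl⟩ := notMem_maximalIdeal.mp ham
  have hinv : (↑u⁻¹ * b : T) ∈ A.localizeAtMaximal :=
    ⟨b, hb, u, ha, ham, by rw [← mul_assoc, Units.mul_inv, one_mul]⟩
  refine IsUnit.of_mul_eq_one (a := t) ⟨_, hinv⟩ (Subtype.ext ?_)
  calc (t : T) * (↑u⁻¹ * b) = ↑u⁻¹ * (b * t) := by ring
    _ = 1 := by rw [hab, Units.inv_mul]

theorem mem_nonunits_localizeAtMaximal_iff {t : A.localizeAtMaximal} :
    t ∈ nonunits A.localizeAtMaximal ↔ (t : T) ∈ maximalIdeal T :=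
  ⟨fun ht => not_not.mp fun hm => ht (isUnit_localizeAtMaximal_of_notMem hm),
    fun ht hu => ht (hu.map A.localizeAtMaximal.subtype)⟩

instance : Nontrivial A.localizeAtMaximal :=
  ⟨⟨0, 1, fun h => zero_ne_one (congrArg Subtype.val h)⟩⟩

instance : IsLocalRing A.localizeAtMaximal :=
  .of_nonunits_add fun _ _ hs ht => mem_nonunits_localizeAtMaximal_iff.mpr <|
    add_mem (mem_nonunits_localizeAtMaximal_iff.mp hs)
      (mem_nonunits_localizeAtMaximal_iff.mp ht)

theorem comap_maximalIdeal_localizeAtMaximal :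
    Ideal.comap A.localizeAtMaximal.subtype (maximalIdeal T) =
      maximalIdeal A.localizeAtMaximal :=
  Ideal.ext fun _ => mem_nonunits_localizeAtMaximal_iff.symm

theorem comap_localizeAtMaximal_eq_bot {Q : Ideal T} (hA : ∀ a ∈ A, a ∈ Q → a = 0) :
    Ideal.comap A.localizeAtMaximal.subtype Q = ⊥ := by
  refine (Submodule.eq_bot_iff _).mpr fun t ht => Subtype.ext ?_
  obtain ⟨a, ha, b, hb, hbm, hab⟩ := t.2
  have ha0 : a = 0 := hA a ha (hab ▸ Q.mul_mem_left b ht)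
  exact (notMem_maximalIdeal.mp hbm).mul_right_eq_zero.mp (hab.trans ha0)

theorem cardinalMk_localizeAtMaximal_le : #A.localizeAtMaximal ≤ max #A ℵ₀ := by
  choose a ha b hb hbm hab using fun t : A.localizeAtMaximal => t.2
  have hinj : Function.Injective fun t => ((⟨a t, ha t⟩ : A), (⟨b t, hb t⟩ : A)) := by
    intro s t hst
    simp only [Prod.mk.injEq, Subtype.mk.injEq] at hst
    refine Subtype.ext ((notMem_maximalIdeal.mp (hbm s)).mul_left_cancel ?_)
    rw [hab, hst.1, ← hab t, hst.2]
  calc #A.localizeAtMaximal ≤ #(A × A) := mk_le_of_injective hinj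
    _ = #A * #A := by rw [mk_prod, lift_id]
    _ ≤ max (max #A #A) ℵ₀ := mul_le_max _ _
    _ = max #A ℵ₀ := by rw [max_self]

end Subring

open Subring in
theorem pSubring_adjoin_transcendental_general
    (T : Type*) [CommRing T] [IsLocalRing T]
    (P : Ideal T)
    (R : Subring T) (hR : IsPSubring T P R)
    (x : T)
    (hx : ∀ Q ∈ insert P (associatedPrimes T T),
      Transcendental R ((Ideal.Quotient.mk Q) x)) :
    ∃ S : Subring T,
      (S : Set T) = {t : T | ∃ a ∈ Subring.closure ((R : Set T) ∪ {x}),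
        ∃ b ∈ Subring.closure ((R : Set T) ∪ {x}), b ∉ maximalIdeal T ∧ b * t = a} ∧
      IsPSubring T P S ∧
      (Finite R → Countable S ∧ Infinite S) ∧
      (Infinite R → Cardinal.mk S = Cardinal.mk R) := by
  set A := (Algebra.adjoin R {x}).toSubring
  have hmiss : ∀ Q ∈ insert P (associatedPrimes T T),
      Ideal.comap A.localizeAtMaximal.subtype Q = ⊥ := fun Q hQ =>
    comap_localizeAtMaximal_eq_bot fun _ ha => (hx Q hQ).eq_zero_of_mem_adjoin_of_mem ha
  have hA : #A = max #R ℵ₀ := (hx P (Set.mem_insert P _)).of_quotient.cardinalMk_adjoin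
  have hcard : #A.localizeAtMaximal = max #R ℵ₀ := by
    refine le_antisymm ?_ (hA ▸ mk_le_of_injective (inclusion_injective le_localizeAtMaximal))
    calc #A.localizeAtMaximal ≤ max #A ℵ₀ := cardinalMk_localizeAtMaximal_le
      _ = max #R ℵ₀ := by rw [hA, max_assoc, max_self]
  refine ⟨A.localizeAtMaximal, by rw [closure_union_singleton_eq_adjoin]; rfl,
    ⟨inferInstance, comap_maximalIdeal_localizeAtMaximal (A := A) ▸ maximalIdeal.isMaximal _,
      hcard ▸ IsPSubringBound.max_aleph0 hR.2.2.1, hmiss P (Set.mem_insert P _),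
      fun Q hQ => hmiss Q (Set.mem_insert_of_mem P hQ)⟩, fun _ => ?_, fun _ => ?_⟩
  · have hω : #A.localizeAtMaximal = ℵ₀ := by
      rw [hcard, max_eq_right (lt_aleph0_of_finite R).le]
    exact ⟨mk_le_aleph0_iff.mp hω.le, infinite_iff.mpr hω.ge⟩
  · rw [hcard, max_eq_left (aleph0_le_mk R)]

/-- Adjoining a suitably transcendental element to a `p`-subring and
localizing yields a `p`-subring. -/
theorem pSubring_adjoin_transcendental
    (T : Type*) [CommRing T] [IsLocalRing T] [IsNoetherianRing T]
    [IsAdicComplete (maximalIdeal T) T]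
    (P : Ideal T) (hP : P.IsPrime) (hPm : P ≠ maximalIdeal T)
    (R : Subring T) (hR : IsPSubring T P R)
    (x : T)
    (hx : ∀ Q ∈ insert P (associatedPrimes T T),
      Transcendental R ((Ideal.Quotient.mk Q) x)) :
    ∃ S : Subring T,
      (S : Set T) = {t : T | ∃ a ∈ Subring.closure ((R : Set T) ∪ {x}),
        ∃ b ∈ Subring.closure ((R : Set T) ∪ {x}), b ∉ maximalIdeal T ∧ b * t = a} ∧
      IsPSubring T P S ∧
      (Finite R → Countable S ∧ Infinite S) ∧
      (Infinite R → Cardinal.mk S = Cardinal.mk R) :=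
  pSubring_adjoin_transcendental_general T P R hR x hx
end

section
/- Let (T,m) be a complete local ring and let p be a nonmaximal prime ideal of T. Let y ∈ m \ p be a regular element of T, and let (R, R∩m) be a p-subring of T. Then there exists a p-subring (S, S∩m) of T such that R ⊆ S ⊆ T and yt ∈ S for some unit t of T. Moreover, if R is finite then S is countably infinite, while if R is infinite then |S| = |R|. -/
open IsLocalRing

/-!
Let `C` consist of `P` and the finitely many associated primes of `T`: `y` lies in none of them
and `R` meets each of them trivially. For `q ∈ C` the sums `∑_{i ∈ s} yⁱ`, `s ⊆ ℕ`, are pairwise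
distinct modulo `q`, so `|T/q| ≥ max(𝔠, |T/m|)`; by the size condition on `R` this exceeds
`max(ℵ₀, |R|)`, which bounds the number of elements of `T/q` algebraic over `R`. Avoiding these
small sets one prime at a time gives `a ∈ T` such that `y (1 + y a)` is transcendental over `R`
modulo every `q ∈ C`. The localization `S` of `R[y (1 + y a)]` at its intersection with `m` then
meets every `q ∈ C` trivially and has `|S| = |R[X]| = max(ℵ₀, |R|)`.
-/

open Cardinal Polynomial Finset

universe u

section AdicSum

variable {T : Type u} [CommRing T] {I : Ideal T} {x : T}

def HasAdicSum (I : Ideal T) (x : T) (c : ℕ → T) (L : T) : Prop :=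
  ∀ n, L - ∑ i ∈ range n, c i * x ^ i ∈ I ^ n

lemma sum_Ico_mul_pow_mem (hx : x ∈ I) (c : ℕ → T) {m n : ℕ} :
    ∑ i ∈ Ico m n, c i * x ^ i ∈ I ^ m :=
  Ideal.sum_mem _ fun i hi ↦ Ideal.mul_mem_left _ _
    (Ideal.pow_le_pow_right (mem_Ico.mp hi).1 (Ideal.pow_mem_pow hx i))

lemma exists_hasAdicSum [IsPrecomplete I T] (hx : x ∈ I) (c : ℕ → T) :
    ∃ L, HasAdicSum I x c L := by
  have hI : ∀ n, (I ^ n • ⊤ : Ideal T) = I ^ n := fun n ↦ by rw [smul_eq_mul, Ideal.mul_top]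
  obtain ⟨L, hL⟩ := IsPrecomplete.prec (I := I) inferInstance
    (f := fun n ↦ ∑ i ∈ range n, c i * x ^ i) fun {m n} hmn ↦ by
      rw [SModEq.sub_mem, hI, ← neg_mem_iff, neg_sub, ← Finset.sum_Ico_eq_sub _ hmn]
      exact sum_Ico_mul_pow_mem hx c
  refine ⟨L, fun n ↦ ?_⟩
  have := hL n
  rwa [SModEq.sub_mem, hI, ← neg_mem_iff, neg_sub] at this

lemma HasAdicSum.unique [IsHausdorff I T] {c : ℕ → T} {L M : T} (hL : HasAdicSum I x c L)
    (hM : HasAdicSum I x c M) : L = M := by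
  refine (IsHausdorff.eq_iff_smodEq (I := I)).mpr fun n ↦ ?_
  rw [SModEq.sub_mem, smul_eq_mul, Ideal.mul_top]
  simpa using sub_mem (hL n) (hM n)

lemma HasAdicSum.sub {c d : ℕ → T} {L M : T} (hL : HasAdicSum I x c L)
    (hM : HasAdicSum I x d M) : HasAdicSum I x (c - d) (L - M) := fun n ↦ by
  convert sub_mem (hL n) (hM n) using 1
  simp only [Pi.sub_apply, sub_mul, Finset.sum_sub_distrib]
  ring

lemma HasAdicSum.sub_apply_zero_mem {c : ℕ → T} {L : T} (hL : HasAdicSum I x c L) :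
    L - c 0 ∈ I := by
  simpa using hL 1

lemma HasAdicSum.pow_mul_of_shift (hx : x ∈ I) {c : ℕ → T} {k : ℕ} (hc : ∀ i < k, c i = 0)
    {L : T} (hL : HasAdicSum I x (fun i ↦ c (i + k)) L) : HasAdicSum I x c (x ^ k * L) := by
  intro n
  rcases le_or_gt n k with hn | hn
  · rw [Finset.sum_eq_zero fun i hi ↦ by rw [hc i ((mem_range.mp hi).trans_le hn), zero_mul],
      sub_zero]
    exact Ideal.mul_mem_right _ _ (Ideal.pow_le_pow_right hn (Ideal.pow_mem_pow hx k))
  · obtain ⟨j, rfl⟩ := Nat.exists_eq_add_of_le' hn.le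
    have hsplit : ∑ i ∈ range (j + k), c i * x ^ i =
        x ^ k * ∑ i ∈ range j, c (i + k) * x ^ i := by
      rw [add_comm j k, Finset.sum_range_add, Finset.sum_eq_zero fun i hi ↦ by
        rw [hc i (mem_range.mp hi), zero_mul], zero_add, Finset.mul_sum]
      exact Finset.sum_congr rfl fun i _ ↦ by rw [add_comm k i, pow_add]; ring
    rw [hsplit, ← mul_sub, pow_add, mul_comm (I ^ j)]
    exact Ideal.mul_mem_mul (Ideal.pow_mem_pow hx k) (hL j)

lemma HasAdicSum.notMem [IsAdicComplete I T] {q : Ideal T} [q.IsPrime] (hqI : q ⊔ I ≠ ⊤)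
    (hx : x ∈ I) (hxq : x ∉ q) {c : ℕ → T} {k : ℕ} (hc : ∀ i < k, c i = 0) (hck : IsUnit (c k))
    {L : T} (hL : HasAdicSum I x c L) : L ∉ q := by
  -- `L = xᵏ M` with `M ≡ c k` modulo `I`, and neither factor lies in `q`.
  obtain ⟨M, hM⟩ := exists_hasAdicSum hx fun i ↦ c (i + k)
  rw [hL.unique (hM.pow_mul_of_shift hx hc)]
  intro hmem
  have hMq : M ∈ q := ((‹q.IsPrime›.mem_or_mem hmem).resolve_left
    fun h ↦ hxq (‹q.IsPrime›.mem_of_pow_mem k h))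
  have hck' : c k ∈ q ⊔ I := by
    simpa using sub_mem (Ideal.mem_sup_left hMq) (Ideal.mem_sup_right hM.sub_apply_zero_mem)
  exact hqI (Ideal.eq_top_of_isUnit_mem _ hck' hck)

lemma continuum_le_mk_quotient [IsAdicComplete I T] {q : Ideal T} [q.IsPrime]
    (hqI : q ⊔ I ≠ ⊤) (hx : x ∈ I) (hxq : x ∉ q) : 𝔠 ≤ #(T ⧸ q) := by
  classical
  choose L hL using fun s : Set ℕ ↦ exists_hasAdicSum hx (s.indicator 1)
  have hinj : Function.Injective fun s ↦ Ideal.Quotient.mk q (L s) := by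
    intro s s' hss'
    by_contra hne
    have hdiff : ∃ k, k ∈ symmDiff s s' := by
      by_contra! h
      exact hne (Set.symmDiff_eq_empty.mp (Set.eq_empty_of_forall_notMem h))
    set d : ℕ → T := s.indicator 1 - s'.indicator 1
    have hagree : ∀ i < Nat.find hdiff, d i = 0 := fun i hi ↦ by
      have := Nat.find_min hdiff hi
      simp only [Set.mem_symmDiff, not_or, not_and, not_not] at this
      by_cases h : i ∈ s <;> simp_all [d]
    have hunit : IsUnit (d (Nat.find hdiff)) := by
      rcases Nat.find_spec hdiff with ⟨h, h'⟩ | ⟨h', h⟩ <;> simp [d, h, h']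
    exact (hL s).sub (hL s') |>.notMem hqI hx hxq hagree hunit (Ideal.Quotient.eq.mp hss')
  simpa [Cardinal.mk_set] using Cardinal.lift_mk_le_lift_mk_of_injective hinj

end AdicSum

section Avoidance

variable {T : Type u} [CommRing T]

lemma Ideal.exists_mem_mk_add_notMem {q G : Ideal T} [q.IsPrime] (hG : ¬G ≤ q)
    {V : Set (T ⧸ q)} (hV : #V < #(T ⧸ q)) (g : T) :
    ∃ u ∈ G, Ideal.Quotient.mk q (g + u) ∉ V := by
  obtain ⟨z, hzG, hzq⟩ := SetLike.not_le_iff_exists.mp hG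
  by_contra! h
  have hz : Ideal.Quotient.mk q z ≠ 0 := by rwa [Ne, Ideal.Quotient.eq_zero_iff_mem]
  have hrange : Set.range (fun b ↦ Ideal.Quotient.mk q g + Ideal.Quotient.mk q z * b) ⊆ V := by
    rintro _ ⟨b, rfl⟩
    obtain ⟨c, rfl⟩ := Ideal.Quotient.mk_surjective b
    simpa using h (z * c) (Ideal.mul_mem_right c G hzG)
  have hinj : Function.Injective
      (fun b ↦ Ideal.Quotient.mk q g + Ideal.Quotient.mk q z * b) := fun b b' hbb' ↦
    mul_left_cancel₀ hz (add_left_cancel hbb')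
  exact hV.not_ge ((Cardinal.mk_range_eq _ hinj).symm.trans_le (Cardinal.mk_le_mk_of_subset hrange))

lemma Ideal.exists_sub_mem_forall_mk_notMem (C : Finset (Ideal T)) (hC : ∀ q ∈ C, q.IsPrime)
    (V : ∀ q : Ideal T, Set (T ⧸ q)) (hV : ∀ q ∈ C, #(V q) < #(T ⧸ q)) (G : Ideal T)
    (hG : ∀ q ∈ C, ¬G ≤ q) (g : T) :
    ∃ a, a - g ∈ G ∧ ∀ q ∈ C, Ideal.Quotient.mk q a ∉ V q := by
  induction C using Finset.strongInduction generalizing G g with | H C ih => ?_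
  rcases C.eq_empty_or_nonempty with rfl | hne
  · exact ⟨g, by simp, by simp⟩
  obtain ⟨q₀, hq₀C, hq₀max⟩ := (C : Set (Ideal T)).toFinite.exists_maximalFor id _ hne
  have := hC q₀ hq₀C
  obtain ⟨u, huG, hu⟩ := exists_mem_mk_add_notMem (hG q₀ hq₀C) (hV q₀ hq₀C) g
  -- Later corrections lie in `q₀`, so they keep `a` off `V q₀`; maximality of `q₀` keeps
  -- `G ⊓ q₀` out of the remaining primes.
  have hGq₀ : ∀ q ∈ C.erase q₀, ¬G ⊓ q₀ ≤ q := by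
    intro q hq hle
    obtain ⟨hqq₀, hqC⟩ := mem_erase.mp hq
    rcases ((hC q hqC).mul_le.mp (Ideal.mul_le_inf.trans hle)) with h | h
    · exact hG q hqC h
    · exact hqq₀ (le_antisymm (hq₀max hqC h) h)
  obtain ⟨a, haG, ha⟩ := ih _ (erase_ssubset hq₀C) (fun q hq ↦ hC q (mem_of_mem_erase hq))
    (fun q hq ↦ hV q (mem_of_mem_erase hq)) _ hGq₀ (g + u)
  refine ⟨a, by simpa [sub_add_eq_sub_sub] using add_mem haG.1 huG, fun q hq ↦ ?_⟩
  by_cases hqq₀ : q = q₀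
  · subst hqq₀
    rwa [Ideal.Quotient.eq.mpr haG.2]
  · exact ha q (mem_erase.mpr ⟨hqq₀, hq⟩)

end Avoidance

section Transcendence

variable {R T : Type u} [CommRing R] [CommRing T] [Algebra R T]

lemma cardinalMk_setOf_isAlgebraic_add_mul_le {D : Type u} [CommRing D] [IsDomain D] [Algebra R D]
    (hR : Function.Injective (algebraMap R D)) (u : D) {v : D} (hv : v ≠ 0) :
    #{b : D | IsAlgebraic R (u + v * b)} ≤ max #R ℵ₀ := by
  have : FaithfulSMul R D := (faithfulSMul_iff_algebraMap_injective R D).mpr hR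
  have : IsDomain R := .of_faithfulSMul R D
  exact (Cardinal.mk_preimage_of_injective (fun b ↦ u + v * b) {z | IsAlgebraic R z}
    fun b b' h ↦ mul_left_cancel₀ hv (add_left_cancel h)).trans (Algebraic.cardinalMk_le_max R D)

lemma exists_forall_transcendental_mk (C : Finset (Ideal T)) (hC : ∀ q ∈ C, q.IsPrime)
    (hR : ∀ q ∈ C, Function.Injective (algebraMap R (T ⧸ q)))
    (hcard : ∀ q ∈ C, max #R ℵ₀ < #(T ⧸ q)) (u : T) {v : T} (hv : ∀ q ∈ C, v ∉ q) :
    ∃ a, ∀ q ∈ C, Transcendental R (Ideal.Quotient.mk q (u + v * a)) := by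
  obtain ⟨a, -, ha⟩ := Ideal.exists_sub_mem_forall_mk_notMem C hC
    (fun q ↦ {b | IsAlgebraic R (Ideal.Quotient.mk q u + Ideal.Quotient.mk q v * b)})
    (fun q hq ↦ by
      have := hC q hq
      exact (cardinalMk_setOf_isAlgebraic_add_mul_le (hR q hq) _
        (by rw [Ne, Ideal.Quotient.eq_zero_iff_mem]; exact hv q hq)).trans_lt (hcard q hq))
    ⊤ (fun q hq ↦ by simpa using (hC q hq).ne_top) 0
  exact ⟨a, fun q hq ↦ by simpa [Transcendental] using ha q hq⟩

lemma comap_adjoin_singleton_eq_bot {q : Ideal T} {x : T}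
    (hx : Transcendental R (Ideal.Quotient.mk q x)) :
    q.comap (Algebra.adjoin R {x}).toSubring.subtype = ⊥ := by
  refine (Submodule.eq_bot_iff _).mpr fun ⟨z, hz⟩ hzq ↦ ?_
  rw [Algebra.adjoin_singleton_eq_range_aeval] at hz
  obtain ⟨f, rfl⟩ := hz
  have : aeval (Ideal.Quotient.mk q x) f = 0 := by
    rw [← Ideal.Quotient.mkₐ_eq_mk R, aeval_algHom_apply, Ideal.Quotient.mkₐ_eq_mk,
      Ideal.Quotient.eq_zero_iff_mem]
    exact hzq
  simp [(transcendental_iff_injective.mp hx).eq_iff.mp (this.trans (map_zero _).symm)]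

lemma cardinalMk_adjoin_singleton [Nontrivial R] {x : T} (hx : Transcendental R x) :
    #(Algebra.adjoin R {x}) = max #R ℵ₀ := by
  rw [← (algEquivOfTranscendental R x hx).toEquiv.cardinal_eq, cardinalMk_eq_max]

end Transcendence

lemma Subring.injective_algebraMap_quotient {T : Type u} [CommRing T] {R : Subring T}
    {q : Ideal T} (hq : q.comap R.subtype = ⊥) : Function.Injective (algebraMap R (T ⧸ q)) :=
  (injective_iff_map_eq_zero _).mpr fun r hr ↦ by
    have : r ∈ q.comap R.subtype := (Ideal.Quotient.eq_zero_iff_mem (I := q)).mp hr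
    simpa [hq] using this

namespace Subring

variable {T : Type u} [CommRing T] [IsLocalRing T] (A : Subring T)

lemma isUnit_subtype_primeCompl (b : ((maximalIdeal T).comap A.subtype).primeCompl) :
    IsUnit (A.subtype b) :=
  of_not_not b.2

noncomputable def localizeAtMaximalIdeal : Subring T :=
  (IsLocalization.lift (S := Localization.AtPrime ((maximalIdeal T).comap A.subtype))
    A.isUnit_subtype_primeCompl).range

variable {A}

lemma le_localizeAtMaximalIdeal : A ≤ A.localizeAtMaximalIdeal := fun x hx ↦
  ⟨algebraMap A _ ⟨x, hx⟩, IsLocalization.lift_eq _ _⟩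

lemma cardinalMk_localizeAtMaximalIdeal_le : #A.localizeAtMaximalIdeal ≤ #A :=
  Cardinal.mk_range_le.trans (Localization.cardinalMk_le _)

lemma exists_isUnit_mul_mem {x : T} (hx : x ∈ A.localizeAtMaximalIdeal) :
    ∃ b ∈ A, IsUnit b ∧ b * x ∈ A := by
  obtain ⟨z, rfl⟩ := hx
  obtain ⟨⟨a, b⟩, rfl⟩ :=
    IsLocalization.mk'_surjective ((maximalIdeal T).comap A.subtype).primeCompl z
  refine ⟨b, b.1.2, A.isUnit_subtype_primeCompl b, ?_⟩
  convert a.2 using 1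
  exact ((IsLocalization.lift_mk'_spec A.isUnit_subtype_primeCompl a _ b).mp rfl).symm

instance isLocalHom_subtype_localizeAtMaximalIdeal :
    IsLocalHom A.localizeAtMaximalIdeal.subtype := by
  refine ⟨fun y hy ↦ ?_⟩
  obtain ⟨z, hz⟩ := y.2
  obtain ⟨⟨a, b⟩, rfl⟩ :=
    IsLocalization.mk'_surjective ((maximalIdeal T).comap A.subtype).primeCompl z
  have hab := (IsLocalization.lift_mk'_spec A.isUnit_subtype_primeCompl a _ b).mp hz
  have ha : a ∈ ((maximalIdeal T).comap A.subtype).primeCompl := fun ha ↦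
    ha (by simpa [hab] using (A.isUnit_subtype_primeCompl b).mul hy)
  have hy' : y = (IsLocalization.lift (S := Localization.AtPrime ((maximalIdeal T).comap A.subtype))
      A.isUnit_subtype_primeCompl).rangeRestrict (IsLocalization.mk' _ a b) :=
    Subtype.ext hz.symm
  rw [hy']
  exact ((IsLocalization.AtPrime.isUnit_mk'_iff _ _ a b).mpr ha).map _

lemma comap_localizeAtMaximalIdeal_eq_bot {q : Ideal T} (hq : q.comap A.subtype = ⊥) :
    q.comap A.localizeAtMaximalIdeal.subtype = ⊥ := by
  refine (Submodule.eq_bot_iff _).mpr fun ⟨x, hx⟩ hxq ↦ ?_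
  obtain ⟨b, hbA, hb, hbx⟩ := exists_isUnit_mul_mem hx
  have : (⟨b * x, hbx⟩ : A) ∈ q.comap A.subtype := Ideal.mul_mem_left q b hxq
  rw [hq, Submodule.mem_bot] at this
  simpa [hb.mul_right_eq_zero] using congrArg Subtype.val this

end Subring

namespace Cardinal

lemma max_aleph0_lt_max_continuum {r k : Cardinal} (h₁ : r ≤ max ℵ₀ k)
    (h₂ : r = max ℵ₀ k → k ≤ ℵ₀) : max r ℵ₀ < max 𝔠 k := by
  rcases le_or_gt k ℵ₀ with hk | hk
  · rw [max_eq_left hk] at h₁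
    exact (max_eq_right h₁).trans_lt (aleph0_lt_continuum.trans_le (le_max_left _ _))
  · rw [max_eq_right hk.le] at h₁ h₂
    have hr : r < k := h₁.lt_of_ne fun h ↦ (h₂ h).not_gt hk
    exact (max_lt hr hk).trans_le (le_max_right _ _)

lemma le_aleph0_of_max_aleph0_eq {r k : Cardinal} (h₂ : r = max ℵ₀ k → k ≤ ℵ₀)
    (h : max r ℵ₀ = max ℵ₀ k) : k ≤ ℵ₀ := by
  by_contra! hk
  rw [max_eq_right hk.le] at h h₂
  have hr : ℵ₀ ≤ r := by
    by_contra! hr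
    rw [max_eq_right hr.le] at h
    exact hk.ne h
  exact (h₂ ((max_eq_left hr).symm.trans h)).not_gt hk

end Cardinal

section CompleteLocalRing

variable {T : Type u} [CommRing T] [IsLocalRing T]

lemma max_aleph0_lt_cardinalMk_quotient [IsAdicComplete (maximalIdeal T) T] {r : Cardinal}
    (h₁ : r ≤ max ℵ₀ #(ResidueField T)) (h₂ : r = max ℵ₀ #(ResidueField T) → #(ResidueField T) ≤ ℵ₀)
    {q : Ideal T} (hq : q.IsPrime) {y : T} (hym : y ∈ maximalIdeal T) (hyq : y ∉ q) :
    max r ℵ₀ < #(T ⧸ q) := by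
  have hqm : q ≤ maximalIdeal T := le_maximalIdeal hq.ne_top
  refine (max_aleph0_lt_max_continuum h₁ h₂).trans_le (max_le ?_ ?_)
  · exact continuum_le_mk_quotient (by simpa [sup_eq_right.mpr hqm] using
      (maximalIdeal.isMaximal T).ne_top) hym hyq
  · exact Cardinal.mk_le_of_surjective (Ideal.Quotient.factor_surjective hqm)

lemma exists_unit_forall_transcendental_mk_mul {R : Type u} [CommRing R] [Algebra R T]
    (C : Finset (Ideal T)) (hC : ∀ q ∈ C, q.IsPrime)
    (hR : ∀ q ∈ C, Function.Injective (algebraMap R (T ⧸ q)))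
    (hcard : ∀ q ∈ C, max #R ℵ₀ < #(T ⧸ q)) {y : T} (hym : y ∈ maximalIdeal T)
    (hyC : ∀ q ∈ C, y ∉ q) :
    ∃ t : Tˣ, ∀ q ∈ C, Transcendental R (Ideal.Quotient.mk q (y * t)) := by
  obtain ⟨a, ha⟩ := exists_forall_transcendental_mk C hC hR hcard y (v := y ^ 2)
    fun q hq hy ↦ hyC q hq ((hC q hq).mem_of_pow_mem 2 hy)
  have ht : IsUnit (1 + y * a) := by
    simpa using isUnit_one_sub_self_of_mem_nonunits (-(y * a))
      (neg_mem (Ideal.mul_mem_right a _ hym))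
  exact ⟨ht.unit, fun q hq ↦ by simpa [mul_add, ← mul_assoc, sq] using ha q hq⟩

lemma cardinalMk_localizeAtMaximalIdeal_adjoin {R : Type u} [CommRing R] [Nontrivial R]
    [Algebra R T] {w : T} (hw : Transcendental R w) :
    #(Algebra.adjoin R {w}).toSubring.localizeAtMaximalIdeal = max #R ℵ₀ := by
  rw [← cardinalMk_adjoin_singleton hw]
  exact le_antisymm Subring.cardinalMk_localizeAtMaximalIdeal_le
    (Cardinal.mk_le_mk_of_subset fun _ hx ↦ Subring.le_localizeAtMaximalIdeal hx)

lemma isPSubring_of_isLocalHom {P : Ideal T} {S : Subring T} [IsLocalHom S.subtype]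
    (h₁ : #S ≤ max ℵ₀ #(ResidueField T)) (h₂ : #S = max ℵ₀ #(ResidueField T) →
      #(ResidueField T) ≤ ℵ₀)
    (hP : P.comap S.subtype = ⊥) (hQ : ∀ Q ∈ associatedPrimes T T, Q.comap S.subtype = ⊥) :
    IsPSubring T P S :=
  have := S.subtype.domain_isLocalRing
  ⟨this, maximalIdeal_comap S.subtype ▸ maximalIdeal.isMaximal S, ⟨h₁, h₂⟩, hP, hQ⟩

end CompleteLocalRing

theorem pSubring_adjoin_associate_general
    (T : Type*) [CommRing T] [IsLocalRing T] [IsNoetherianRing T]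
    [IsAdicComplete (maximalIdeal T) T]
    (P : Ideal T) (hP : P.IsPrime)
    (y : T) (hyreg : y ∈ nonZeroDivisors T) (hym : y ∈ maximalIdeal T) (hyP : y ∉ P)
    (R : Subring T) (hR : IsPSubring T P R) :
    ∃ S : Subring T, IsPSubring T P S ∧ R ≤ S ∧ (∃ t : Tˣ, y * (t : T) ∈ S) ∧
      (Finite R → Countable S ∧ Infinite S) ∧
      (Infinite R → Cardinal.mk S = Cardinal.mk R) := by
  classical
  obtain ⟨-, -, ⟨hRle, hReq⟩, hRP, hRQ⟩ := hR
  set C : Finset (Ideal T) := insert P (associatedPrimes.finite T T).toFinset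
  have hC : ∀ q ∈ C, q.IsPrime ∧ y ∉ q ∧ q.comap R.subtype = ⊥ := by
    simp only [C, Finset.mem_insert, Set.Finite.mem_toFinset]
    rintro q (rfl | hq)
    · exact ⟨hP, hyP, hRP⟩
    · refine ⟨hq.isPrime, fun hy ↦ ?_, hRQ q hq⟩
      exact (biUnion_associatedPrimes_eq_compl_nonZeroDivisors T).subset
        (Set.mem_biUnion hq hy) hyreg
  obtain ⟨t, ht⟩ := exists_unit_forall_transcendental_mk_mul C (fun q hq ↦ (hC q hq).1)
    (fun q hq ↦ Subring.injective_algebraMap_quotient (hC q hq).2.2)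
    (fun q hq ↦ max_aleph0_lt_cardinalMk_quotient hRle hReq (hC q hq).1 hym (hC q hq).2.1)
    hym fun q hq ↦ (hC q hq).2.1
  set S := (Algebra.adjoin R {y * (t : T)}).toSubring.localizeAtMaximalIdeal
  have hS : ∀ q ∈ C, q.comap S.subtype = ⊥ := fun q hq ↦
    Subring.comap_localizeAtMaximalIdeal_eq_bot (comap_adjoin_singleton_eq_bot (ht q hq))
  have hSR : #S = max #R ℵ₀ := cardinalMk_localizeAtMaximalIdeal_adjoin
    fun h ↦ ht P (Finset.mem_insert_self _ _) (h.algHom (Ideal.Quotient.mkₐ R P))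
  refine ⟨S, isPSubring_of_isLocalHom (hSR ▸ max_le hRle (le_max_left _ _))
      (fun h ↦ le_aleph0_of_max_aleph0_eq hReq (hSR ▸ h)) (hS P (Finset.mem_insert_self _ _))
      fun Q hQ ↦ hS Q (by simpa [C] using Or.inr hQ),
    fun r hr ↦ Subring.le_localizeAtMaximalIdeal (Subalgebra.algebraMap_mem _ (⟨r, hr⟩ : R)),
    ⟨t, Subring.le_localizeAtMaximalIdeal (Algebra.self_mem_adjoin_singleton R _)⟩,
    fun _ ↦ ?_, fun _ ↦ hSR.trans (max_eq_left (aleph0_le_mk R))⟩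
  have hS0 : #S = ℵ₀ := hSR.trans (max_eq_right (lt_aleph0_of_finite R).le)
  exact ⟨mk_le_aleph0_iff.mp hS0.le, infinite_iff.mpr hS0.ge⟩

/-- Enlarging a `p`-subring to contain an associate of a given regular
element `y ∈ m \ p`. -/
theorem pSubring_adjoin_associate
    (T : Type*) [CommRing T] [IsLocalRing T] [IsNoetherianRing T]
    [IsAdicComplete (maximalIdeal T) T]
    (P : Ideal T) (hP : P.IsPrime) (hPm : P ≠ maximalIdeal T)
    (y : T) (hyreg : y ∈ nonZeroDivisors T) (hym : y ∈ maximalIdeal T) (hyP : y ∉ P)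
    (R : Subring T) (hR : IsPSubring T P R) :
    ∃ S : Subring T, IsPSubring T P S ∧ R ≤ S ∧ (∃ t : Tˣ, y * (t : T) ∈ S) ∧
      (Finite R → Countable S ∧ Infinite S) ∧
      (Infinite R → Cardinal.mk S = Cardinal.mk R) :=
  pSubring_adjoin_associate_general T P hP y hyreg hym hyP R hR
end

section
/- Let (T,m) be a complete local ring and let Π be the prime subring of T. Suppose that all nonzero elements of Π are regular elements of T and let p be a nonmaximal prime ideal of T such that Π ∩ p = (0). Let y_1, y_2, … be a countable collection of regular elements of T with y_i ∈ m \ p for all i. Then there exists a countably infinite p-subring (R, R∩m) of T such that, for every i, there is a unit t_i of T with y_i t_i ∈ R. -/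
open IsLocalRing

/-!
If `T` is `I`-adically complete and `y ∈ I`, the units `u a = 1 + y * ∑_{n ∈ a} y ^ n`,
`a ⊆ ℕ`, form an uncountable family in which `y * u a - y * u b` is `y ^ k` times a unit
whenever `a ≠ b`, so the `y * u a` are pairwise distinct modulo every prime not containing `y`.
Let `S` be a countable subring meeting each prime `J` of a countable family `𝒥` only in `0`.
A nonzero polynomial over `S` stays nonzero over the domain `T ⧸ J`, so it has only finitely
many roots there; hence for all but countably many `a` the ring `S[y * u a]` still meets every
`J ∈ 𝒥` only in `0`.

For the theorem take `𝒥 = {p} ∪ Ass T`, whose members consist of zero divisors, start from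
the prime subring and adjoin associates of `y₁, y₂, …` one after another; the localization of
the countable union `A` at `A ∩ m`, taken inside `T`, is the `p`-subring.
-/

open Polynomial

theorem Ideal.comap_subtype_eq_bot_iff {T : Type*} [CommRing T] {S : Subring T} {J : Ideal T} :
    J.comap S.subtype = ⊥ ↔ ∀ x ∈ S, x ∈ J → x = 0 := by
  simp [eq_bot_iff, SetLike.le_def]

theorem notMem_nonZeroDivisors_of_mem_associatedPrimes {T : Type*} [CommRing T]
    [IsNoetherianRing T] {J : Ideal T} (hJ : J ∈ associatedPrimes T T) {x : T} (hx : x ∈ J) :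
    x ∉ nonZeroDivisors T :=
  (biUnion_associatedPrimes_eq_compl_nonZeroDivisors T).subset (Set.mem_biUnion hJ hx)

theorem not_countable_set_nat : ¬Countable (Set ℕ) := fun _ =>
  let ⟨f, hf⟩ := exists_surjective_nat (Set ℕ)
  Function.cantor_surjective f hf

instance Polynomial.countable {R : Type*} [Semiring R] [Countable R] : Countable R[X] :=
  Function.Injective.countable (f := fun p : R[X] => p.toFinsupp.coeff)
    (AddMonoidAlgebra.coeffEquiv.injective.comp Polynomial.toFinsupp_injective)

section AdicSeries

variable {T : Type*} [CommRing T] {I : Ideal T} {y : T} {c c' : ℕ → T} {L L' : T}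

def IsAdicSeriesSum (I : Ideal T) (y : T) (c : ℕ → T) (L : T) : Prop :=
  ∀ N, L - ∑ n ∈ Finset.range N, c n * y ^ n ∈ I ^ N

theorem sum_range_sub_sum_range_mem_pow (hy : y ∈ I) (c : ℕ → T) {M N : ℕ} (h : M ≤ N) :
    ∑ n ∈ Finset.range N, c n * y ^ n - ∑ n ∈ Finset.range M, c n * y ^ n ∈ I ^ M := by
  rw [← Finset.sum_Ico_eq_sub _ h]
  exact Ideal.sum_mem _ fun n hn => Ideal.mul_mem_left _ _
    (Ideal.pow_le_pow_right (Finset.mem_Ico.mp hn).1 (Ideal.pow_mem_pow hy n))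

theorem exists_isAdicSeriesSum [IsPrecomplete I T] (hy : y ∈ I) (c : ℕ → T) :
    ∃ L, IsAdicSeriesSum I y c L := by
  obtain ⟨L, hL⟩ := IsPrecomplete.prec ‹_› fun {M N} h => by
    rw [SModEq.sub_mem, smul_eq_mul, Ideal.mul_top, ← neg_sub]
    exact neg_mem (sum_range_sub_sum_range_mem_pow hy c h)
  refine ⟨L, fun N => ?_⟩
  have := SModEq.sub_mem.mp (hL N)
  rw [smul_eq_mul, Ideal.mul_top, ← neg_sub] at this
  exact neg_mem_iff.mp this

theorem IsAdicSeriesSum.eq [IsHausdorff I T] (h : IsAdicSeriesSum I y c L)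
    (h' : IsAdicSeriesSum I y c L') : L = L' :=
  sub_eq_zero.mp <| IsHausdorff.haus ‹_› _ fun N => by
    simpa [SModEq.sub_mem, Ideal.mul_top] using Ideal.sub_mem _ (h N) (h' N)

theorem IsAdicSeriesSum.sub (h : IsAdicSeriesSum I y c L) (h' : IsAdicSeriesSum I y c' L') :
    IsAdicSeriesSum I y (c - c') (L - L') := fun N => by
  simpa [sub_mul, Finset.sum_sub_distrib, sub_sub_sub_comm] using Ideal.sub_mem _ (h N) (h' N)

theorem IsAdicSeriesSum.sub_coeff_zero_mem (h : IsAdicSeriesSum I y c L) : L - c 0 ∈ I := by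
  simpa using h 1

theorem sum_range_eq_pow_mul_sum_range {d : ℕ} (hc : ∀ n < d, c n = 0) (N : ℕ) :
    ∑ n ∈ Finset.range N, c n * y ^ n =
      y ^ d * ∑ k ∈ Finset.range (N - d), c (d + k) * y ^ k := by
  rcases le_total N d with hN | hN
  · rw [Nat.sub_eq_zero_of_le hN, Finset.sum_range_zero, mul_zero]
    exact Finset.sum_eq_zero fun n hn => by
      rw [hc n ((Finset.mem_range.mp hn).trans_le hN), zero_mul]
  · obtain ⟨k, rfl⟩ := Nat.exists_eq_add_of_le hN
    rw [Finset.sum_range_add, Finset.sum_eq_zero fun n hn => by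
      rw [hc n (Finset.mem_range.mp hn), zero_mul], zero_add, Nat.add_sub_cancel_left,
      Finset.mul_sum]
    exact Finset.sum_congr rfl fun n _ => by ring

theorem IsAdicSeriesSum.pow_mul (hy : y ∈ I) {d : ℕ} (hc : ∀ n < d, c n = 0)
    (h : IsAdicSeriesSum I y (fun k => c (d + k)) L) : IsAdicSeriesSum I y c (y ^ d * L) :=
  fun N => by
    rw [sum_range_eq_pow_mul_sum_range hc, ← mul_sub]
    exact Ideal.pow_le_pow_right (by omega) (pow_add I d (N - d) ▸
      Ideal.mul_mem_mul (Ideal.pow_mem_pow hy d) (h (N - d)))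

theorem IsAdicSeriesSum.exists_eq_pow_mul_unit [IsAdicComplete I T] (hy : y ∈ I) {d : ℕ}
    (h : IsAdicSeriesSum I y c L) (hc : ∀ n < d, c n = 0) (hd : IsUnit (c d)) :
    ∃ w : Tˣ, L = y ^ d * w := by
  obtain ⟨L', hL'⟩ := exists_isAdicSeriesSum hy fun k => c (d + k)
  obtain ⟨u, hu⟩ := hd
  have hunit : IsUnit (L' * ↑u⁻¹) := by
    refine Ideal.isUnit_of_sub_one_mem_jacobson_bot _ (IsAdicComplete.le_jacobson_bot I ?_)
    rw [← u.mul_inv, ← sub_mul, hu]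
    exact Ideal.mul_mem_right _ _ hL'.sub_coeff_zero_mem
  exact ⟨(isUnit_of_mul_isUnit_left hunit).unit, h.eq (hL'.pow_mul hy hc)⟩

end AdicSeries

section Avoidance

variable {T : Type*} [CommRing T] {I : Ideal T} {y : T}

theorem exists_units_sub_eq_pow_mul_unit [Nontrivial T] [IsAdicComplete I T] (hy : y ∈ I) :
    ∃ u : Set ℕ → Tˣ, ∀ a b, a ≠ b → ∃ (n : ℕ) (w : Tˣ), (u a : T) - u b = y ^ n * w := by
  classical
  choose L hL using fun a : Set ℕ => exists_isAdicSeriesSum hy (a.indicator 1)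
  have hu : ∀ a, IsUnit (1 + y * L a) := fun a =>
    Ideal.isUnit_of_sub_one_mem_jacobson_bot _
      (IsAdicComplete.le_jacobson_bot I (by simpa using I.mul_mem_right (L a) hy))
  refine ⟨fun a => (hu a).unit, fun a b hab => ?_⟩
  have hex : ∃ n, (a.indicator 1 - b.indicator 1 : ℕ → T) n ≠ 0 := by
    by_contra! h
    refine hab (Set.ext fun n => ?_)
    have := h n
    by_cases ha : n ∈ a <;> by_cases hb : n ∈ b <;> simp_all
  have hunit : IsUnit ((a.indicator 1 - b.indicator 1 : ℕ → T) (Nat.find hex)) := by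
    have := Nat.find_spec hex
    by_cases ha : Nat.find hex ∈ a <;> by_cases hb : Nat.find hex ∈ b <;> simp_all
  obtain ⟨w, hw⟩ := ((hL a).sub (hL b)).exists_eq_pow_mul_unit hy
    (fun n hn => not_not.mp (Nat.find_min hex hn)) hunit
  exact ⟨Nat.find hex + 1, w, by simp [← mul_sub, hw, pow_succ']; ring⟩

theorem Ideal.IsPrime.pow_mul_unit_notMem {J : Ideal T} (hJ : J.IsPrime) (hy : y ∉ J) (n : ℕ)
    (w : Tˣ) : y ^ n * w ∉ J :=
  hJ.mul_notMem (fun h => hy (hJ.mem_of_pow_mem n h)) (Ideal.notMem_of_isUnit J w.isUnit)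

theorem exists_unit_comap_adjoin_eq_bot [Nontrivial T] [IsAdicComplete I T]
    {𝒥 : Set (Ideal T)} (h𝒥 : 𝒥.Countable) (hprime : ∀ J ∈ 𝒥, J.IsPrime)
    {S : Subring T} [Countable S] (hS : ∀ J ∈ 𝒥, J.comap S.subtype = ⊥)
    (hy : y ∈ I) (hyJ : ∀ J ∈ 𝒥, y ∉ J) :
    ∃ t : Tˣ, ∀ J ∈ 𝒥, J.comap (Algebra.adjoin S {y * t}).toSubring.subtype = ⊥ := by
  obtain ⟨u, hu⟩ := exists_units_sub_eq_pow_mul_unit hy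
  have hfin : ∀ J ∈ 𝒥, ∀ g : S[X], g ≠ 0 → {a | aeval (y * u a) g ∈ J}.Finite := by
    intro J hJ g hg
    have hJp := hprime J hJ
    have hφ : Function.Injective ((Ideal.Quotient.mk J).comp S.subtype) := by
      rw [RingHom.injective_iff_ker_eq_bot, ← RingHom.comap_ker, Ideal.mk_ker, hS J hJ]
    have hinj : Function.Injective fun a => Ideal.Quotient.mk J (y * u a) := by
      intro a b hab
      by_contra hne
      obtain ⟨n, w, hw⟩ := hu a b hne
      refine (hJp.pow_mul_unit_notMem (hyJ J hJ) (n + 1) w) ?_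
      rw [pow_succ', mul_assoc, ← hw, mul_sub, ← Ideal.Quotient.eq]
      exact hab
    refine ((finite_setOfPred_isRoot ((Polynomial.map_ne_zero_iff hφ).mpr hg)).preimage
      hinj.injOn).subset fun a ha => ?_
    rw [Set.mem_preimage, Set.mem_ofPred_eq, IsRoot, eval_map, ← hom_eval₂,
      Ideal.Quotient.eq_zero_iff_mem]
    exact ha
  set bad := ⋃ J ∈ 𝒥, ⋃ g : {g : S[X] // g ≠ 0}, {a | aeval (y * u a) g.1 ∈ J}
  have hbad : bad.Countable :=
    h𝒥.biUnion fun J hJ => Set.countable_iUnion fun g => (hfin J hJ g.1 g.2).countable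
  obtain ⟨a, ha⟩ : ∃ a, a ∉ bad := by
    by_contra! h
    exact not_countable_set_nat (Set.countable_univ_iff.mp (Set.eq_univ_of_forall h ▸ hbad))
  refine ⟨u a, fun J hJ => Ideal.comap_subtype_eq_bot_iff.mpr fun x hx hxJ => ?_⟩
  obtain ⟨g, rfl⟩ : ∃ g : S[X], aeval (y * u a) g = x := by
    rwa [← AlgHom.mem_range, ← Algebra.adjoin_singleton_eq_range_aeval]
  by_contra hx0
  exact ha (Set.mem_biUnion hJ (Set.mem_iUnion_of_mem ⟨g, by rintro rfl; simp at hx0⟩ hxJ))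

end Avoidance

section Chain

variable {T : Type*} [CommRing T] {I : Ideal T}

theorem countable_adjoin_singleton (S : Subring T) [Countable S] (z : T) :
    Countable (Algebra.adjoin S {z}) := by
  have : ((Algebra.adjoin S {z} : Subalgebra S T) : Set T).Countable := by
    rw [Algebra.adjoin_singleton_eq_range_aeval, AlgHom.coe_range]
    exact Set.countable_range _
  exact this.to_subtype

theorem exists_countable_subring_comap_eq_bot_with_associates [Nontrivial T]
    [IsAdicComplete I T] {𝒥 : Set (Ideal T)} (h𝒥 : 𝒥.Countable)
    (hprime : ∀ J ∈ 𝒥, J.IsPrime) (S₀ : Subring T) [Countable S₀]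
    (hS₀ : ∀ J ∈ 𝒥, J.comap S₀.subtype = ⊥) (y : ℕ → T) (hy : ∀ i, y i ∈ I)
    (hyJ : ∀ i, ∀ J ∈ 𝒥, y i ∉ J) :
    ∃ A : Subring T, Countable A ∧ (∀ J ∈ 𝒥, J.comap A.subtype = ⊥) ∧
      ∀ i, ∃ t : Tˣ, y i * t ∈ A := by
  let Good := {S : Subring T // Countable S ∧ ∀ J ∈ 𝒥, J.comap S.subtype = ⊥}
  have hstep (S : Good) (i : ℕ) : ∃ S' : Good, S.1 ≤ S'.1 ∧ ∃ t : Tˣ, y i * t ∈ S'.1 := by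
    obtain ⟨S, _, hS⟩ := S
    obtain ⟨t, ht⟩ := exists_unit_comap_adjoin_eq_bot h𝒥 hprime hS (hy i) (hyJ i)
    exact ⟨⟨_, countable_adjoin_singleton S _, ht⟩,
      fun s hs => Subalgebra.algebraMap_mem _ (⟨s, hs⟩ : S),
      t, Algebra.self_mem_adjoin_singleton S _⟩
  choose next hle hnext using hstep
  let chain (n : ℕ) : Good := Nat.rec ⟨S₀, ‹_›, hS₀⟩ (fun n S => next S n) n
  have hdir : Directed (· ≤ ·) fun n => (chain n).1 :=
    (monotone_nat_of_le_succ fun n => hle (chain n) n).directed_le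
  refine ⟨⨆ n, (chain n).1, ?_, fun J hJ => ?_, fun i => ?_⟩
  · have : ((⨆ n, (chain n).1 : Subring T) : Set T).Countable := by
      rw [Subring.coe_iSup_of_directed hdir]
      exact Set.countable_iUnion fun n => @Set.countable_coe_iff _ _ |>.mp (chain n).2.1
    exact this.to_subtype
  · refine Ideal.comap_subtype_eq_bot_iff.mpr fun x hx => ?_
    obtain ⟨n, hn⟩ := (Subring.mem_iSup_of_directed hdir).mp hx
    exact Ideal.comap_subtype_eq_bot_iff.mp ((chain n).2.2 J hJ) x hn
  · obtain ⟨t, ht⟩ := hnext (chain i) i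
    exact ⟨t, (Subring.mem_iSup_of_directed hdir).mpr ⟨i + 1, ht⟩⟩

end Chain

namespace Subring

variable {T : Type*} [CommRing T] [IsLocalRing T] (A : Subring T)

/-- The localization of `A` at its prime `A ∩ m`, realized inside `T`. -/
noncomputable def localizationAtMaximalIdeal : Subring T :=
  (IsLocalization.lift (M := ((maximalIdeal T).comap A.subtype).primeCompl)
    (S := Localization.AtPrime ((maximalIdeal T).comap A.subtype)) (g := A.subtype)
    fun c => notMem_maximalIdeal.mp c.2).range

variable {A}

theorem mem_localizationAtMaximalIdeal {x : T} :
    x ∈ A.localizationAtMaximalIdeal ↔ ∃ c ∈ A, c ∉ maximalIdeal T ∧ c * x ∈ A := by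
  constructor
  · rintro ⟨q, rfl⟩
    obtain ⟨⟨s, c⟩, rfl⟩ := IsLocalization.mk'_surjective
      ((maximalIdeal T).comap A.subtype).primeCompl q
    refine ⟨c, c.1.2, c.2, ?_⟩
    convert s.2 using 1
    exact ((IsLocalization.lift_mk'_spec (S := Localization.AtPrime _) (g := A.subtype)
      _ s _ c).mp rfl).symm
  · rintro ⟨c, hc, hcm, hx⟩
    exact ⟨IsLocalization.mk' _ (⟨c * x, hx⟩ : A)
      (⟨⟨c, hc⟩, hcm⟩ : ((maximalIdeal T).comap A.subtype).primeCompl),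
      (IsLocalization.lift_mk'_spec _ _ _ _).mpr rfl⟩

theorem le_localizationAtMaximalIdeal : A ≤ A.localizationAtMaximalIdeal := fun x hx =>
  mem_localizationAtMaximalIdeal.mpr ⟨1, A.one_mem, Ideal.one_notMem _, by simpa⟩

instance countable_localizationAtMaximalIdeal [Countable A] :
    Countable A.localizationAtMaximalIdeal := by
  have : Countable (Localization.AtPrime ((maximalIdeal T).comap A.subtype)) :=
    (IsLocalization.mk'_surjective ((maximalIdeal T).comap A.subtype).primeCompl).countable
  exact (Set.countable_range _).to_subtype

theorem comap_subtype_localizationAtMaximalIdeal_eq_bot {J : Ideal T}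
    (h : J.comap A.subtype = ⊥) : J.comap A.localizationAtMaximalIdeal.subtype = ⊥ := by
  refine Ideal.comap_subtype_eq_bot_iff.mpr fun x hx hxJ => ?_
  obtain ⟨c, hc, hcm, hcx⟩ := mem_localizationAtMaximalIdeal.mp hx
  have : c * x = 0 := Ideal.comap_subtype_eq_bot_iff.mp h _ hcx (J.mul_mem_left c hxJ)
  exact (notMem_maximalIdeal.mp hcm).mul_right_eq_zero.mp this

instance isLocalHom_subtype_localizationAtMaximalIdeal :
    IsLocalHom A.localizationAtMaximalIdeal.subtype := by
  refine ⟨fun ⟨x, hx⟩ hxu => ?_⟩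
  obtain ⟨c, hc, hcm, hcx⟩ := mem_localizationAtMaximalIdeal.mp hx
  obtain ⟨u, rfl⟩ := hxu
  have hinv : (↑u⁻¹ : T) ∈ A.localizationAtMaximalIdeal :=
    mem_localizationAtMaximalIdeal.mpr ⟨c * u, hcx,
      mt (Ideal.mul_unit_mem_iff_mem _ u.isUnit).mp hcm, by simpa [mul_assoc] using hc⟩
  exact IsUnit.of_mul_eq_one (⟨_, hinv⟩ : A.localizationAtMaximalIdeal) (Subtype.ext u.mul_inv)

end Subring

section PSubring

variable {T : Type*} [CommRing T] [IsLocalRing T]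

theorem Subring.infinite_of_mem_maximalIdeal {R : Subring T} {z : T} (hzR : z ∈ R)
    (hz : z ∈ maximalIdeal T) (hreg : z ∈ nonZeroDivisors T) : Infinite R := by
  refine Infinite.of_injective (fun k : ℕ => (⟨z ^ k, pow_mem hzR k⟩ : R))
    (.of_lt_imp_ne fun k l hkl h => ?_)
  have : z ^ (l - k) = 1 := by
    rw [← mul_cancel_left_mem_nonZeroDivisors (pow_mem hreg k), ← pow_add,
      Nat.add_sub_cancel' hkl.le, mul_one]
    exact (congrArg Subtype.val h).symm
  exact Ideal.one_notMem _ (this ▸ Ideal.pow_mem_of_mem _ hz _ (Nat.sub_pos_of_lt hkl))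

theorem isPSubring_localizationAtMaximalIdeal {P : Ideal T} {A : Subring T} [Countable A]
    (hP : P.comap A.subtype = ⊥) (hass : ∀ Q ∈ associatedPrimes T T, Q.comap A.subtype = ⊥) :
    IsPSubring T P A.localizationAtMaximalIdeal := by
  have := A.localizationAtMaximalIdeal.subtype.domain_isLocalRing
  refine ⟨this,
    maximalIdeal_comap A.localizationAtMaximalIdeal.subtype ▸ maximalIdeal.isMaximal _,
    ⟨Cardinal.mk_le_aleph0.trans (le_max_left _ _),
      fun h => (le_max_right _ _).trans (h.symm.trans_le Cardinal.mk_le_aleph0)⟩,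
    Subring.comap_subtype_localizationAtMaximalIdeal_eq_bot hP,
    fun Q hQ => Subring.comap_subtype_localizationAtMaximalIdeal_eq_bot (hass Q hQ)⟩

end PSubring

theorem exists_countable_pSubring_with_associates_general
    (T : Type*) [CommRing T] [IsLocalRing T] [IsNoetherianRing T]
    [IsAdicComplete (maximalIdeal T) T]
    (hreg : ∀ x ∈ (Int.castRingHom T).range, x ≠ 0 → x ∈ nonZeroDivisors T)
    (P : Ideal T) (hP : P.IsPrime)
    (hPiP : ∀ x ∈ (Int.castRingHom T).range, x ∈ P → x = 0)
    (y : ℕ → T)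
    (hy : ∀ i, y i ∈ nonZeroDivisors T ∧ y i ∈ maximalIdeal T ∧ y i ∉ P) :
    ∃ R : Subring T, IsPSubring T P R ∧ Countable R ∧ Infinite R ∧
      ∀ i, ∃ t : Tˣ, y i * (t : T) ∈ R := by
  set 𝒥 := insert P (associatedPrimes T T)
  have hprime : ∀ J ∈ 𝒥, J.IsPrime := by
    rintro J (rfl | hJ)
    exacts [hP, hJ.isPrime]
  have hℤ : ∀ J ∈ 𝒥, J.comap (Int.castRingHom T).range.subtype = ⊥ := by
    rintro J (rfl | hJ) <;> refine Ideal.comap_subtype_eq_bot_iff.mpr fun x hx hxJ => ?_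
    · exact hPiP x hx hxJ
    · by_contra hx0
      exact notMem_nonZeroDivisors_of_mem_associatedPrimes hJ hxJ (hreg x hx hx0)
  have hyJ (i) : ∀ J ∈ 𝒥, y i ∉ J := by
    rintro J (rfl | hJ) hmem
    exacts [(hy i).2.2 hmem, notMem_nonZeroDivisors_of_mem_associatedPrimes hJ hmem (hy i).1]
  have : Countable (Int.castRingHom T).range :=
    (Int.castRingHom T).rangeRestrict_surjective.countable
  obtain ⟨A, hAc, hA, hyA⟩ := exists_countable_subring_comap_eq_bot_with_associates
    ((associatedPrimes.finite T T).countable.insert P) hprime _ hℤ y (fun i => (hy i).2.1) hyJ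
  have hyR (i) : ∃ t : Tˣ, y i * t ∈ A.localizationAtMaximalIdeal :=
    (hyA i).imp fun t ht => Subring.le_localizationAtMaximalIdeal ht
  obtain ⟨t, ht⟩ := hyR 0
  exact ⟨_, isPSubring_localizationAtMaximalIdeal (hA P (Set.mem_insert _ _))
      (fun Q hQ => hA Q (Set.mem_insert_of_mem _ hQ)), inferInstance,
    Subring.infinite_of_mem_maximalIdeal ht (Ideal.mul_mem_right _ _ (hy 0).2.1)
      (mul_mem (hy 0).1 t.isUnit.mem_nonZeroDivisors), hyR⟩

/-- There is a countably infinite `p`-subring of `T` containing associates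
of countably many prescribed regular elements of `m \ p`. -/
theorem exists_countable_pSubring_with_associates
    (T : Type*) [CommRing T] [IsLocalRing T] [IsNoetherianRing T]
    [IsAdicComplete (maximalIdeal T) T]
    (hreg : ∀ x ∈ (Int.castRingHom T).range, x ≠ 0 → x ∈ nonZeroDivisors T)
    (P : Ideal T) (hP : P.IsPrime) (hPm : P ≠ maximalIdeal T)
    (hPiP : ∀ x ∈ (Int.castRingHom T).range, x ∈ P → x = 0)
    (y : ℕ → T)
    (hy : ∀ i, y i ∈ nonZeroDivisors T ∧ y i ∈ maximalIdeal T ∧ y i ∉ P) :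
    ∃ R : Subring T, IsPSubring T P R ∧ Countable R ∧ Infinite R ∧
      ∀ i, ∃ t : Tˣ, y i * (t : T) ∈ R :=
  exists_countable_pSubring_with_associates_general T hreg P hP hPiP y hy
end

section
/- Let (T,m) be a complete local equicharacteristic ring with depth T ≥ 1, and let p be a nonmaximal prime ideal of T. Let y be a regular element of T with y ∈ m \ p. Then there exists a countably infinite N-subring (R, R∩m) of T such that R ∩ p = (0) and yt ∈ R for some unit t of T. -/
/-!
Let `K` be the prime field of `T`; it is countable. The localization `A = K[X]_(X)` is a countable
DVR with uniformizer `X`, and evaluation at `y` extends to a ring map `ψ : A → T`, because a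
polynomial with nonzero constant term evaluates to a unit of the local ring `T`. Every nonzero
element of `A` is a unit times a power of `X`, and `ψ X = y` is a nonzerodivisor in `m`; hence `ψ`
is injective and local, and `ψ⁻¹(J) = 0` for every prime `J` of `T` not containing `y`. This applies
to `J = p` and to the associated primes of `T`, which consist of zerodivisors. The image `R ≅ A`
is a countable DVR, so it is a UFD whose primes are `0` and `R ∩ m`, which forces `ht(R ∩ J) ≤ 1`;
and `y ∈ R` itself.
-/

open IsLocalRing

open Polynomial

theorem Ideal.notMem_of_mem_associatedPrimes_of_mem_nonZeroDivisors {T : Type*} [CommRing T]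
    {Q : Ideal T} (hQ : Q ∈ associatedPrimes T T) {y : T} (hy : y ∈ nonZeroDivisors T) :
    y ∉ Q := by
  obtain ⟨hQprime, x, rfl⟩ := hQ
  rintro ⟨n, hn⟩
  rw [Submodule.mem_colon_singleton, Submodule.mem_bot, smul_eq_mul,
    mul_left_mem_nonZeroDivisors_eq_zero_iff (pow_mem hy n)] at hn
  subst hn
  exact hQprime.ne_top (by simp [Submodule.colon_singleton_zero])

theorem Cardinal.mk_le_max_aleph0_of_countable (α : Type*) [Countable α] (κ : Cardinal) :
    Cardinal.mk α ≤ max Cardinal.aleph0 κ ∧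
      (Cardinal.mk α = max Cardinal.aleph0 κ → κ ≤ Cardinal.aleph0) :=
  ⟨Cardinal.mk_le_aleph0.trans (le_max_left _ _),
    fun h => (le_max_right _ _).trans (h ▸ Cardinal.mk_le_aleph0)⟩

theorem IsLocalRing.not_lt_lt_of_isPrime_of_ne_top {R : Type*} [CommRing R] [IsDomain R]
    [IsPrincipalIdealRing R] [IsLocalRing R] {q₀ q₁ I : Ideal R} [q₁.IsPrime] (hI : I ≠ ⊤) :
    ¬(q₀ < q₁ ∧ q₁ < I) := by
  rintro ⟨h₀₁, h₁I⟩
  have hq₁ : q₁ = maximalIdeal R :=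
    eq_maximalIdeal (Ideal.IsPrime.isMaximal inferInstance (bot_le.trans_lt h₀₁).ne')
  exact (h₁I.trans_le (hq₁ ▸ le_maximalIdeal hI)).false

theorem IsDiscreteValuationRing.infinite (A : Type*) [CommRing A] [IsDomain A]
    [IsDiscreteValuationRing A] : Infinite A := by
  by_contra h
  have : Finite A := not_infinite_iff_finite.mp h
  exact not_a_field A (isField_iff_maximalIdeal_eq.mp (Finite.isField_of_domain A))

namespace IsDiscreteValuationRing

variable {A T : Type*} [CommRing A] [IsDomain A] [IsDiscreteValuationRing A] [CommRing T]
  {ψ : A →+* T} {ϖ : A}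

theorem injective_of_map_irreducible_mem_nonZeroDivisors [Nontrivial T] (hϖ : Irreducible ϖ)
    (hreg : ψ ϖ ∈ nonZeroDivisors T) : Function.Injective ψ := by
  refine (injective_iff_map_eq_zero ψ).mpr fun a ha => by_contra fun ha₀ => ?_
  obtain ⟨n, u, rfl⟩ := eq_unit_mul_pow_irreducible ha₀ hϖ
  rw [map_mul, map_pow, (u.isUnit.map ψ).mul_right_eq_zero] at ha
  exact nonZeroDivisors.ne_zero (pow_mem hreg n) ha

theorem isLocalHom_of_map_irreducible_mem_maximalIdeal [IsLocalRing T] (hϖ : Irreducible ϖ)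
    (hm : ψ ϖ ∈ IsLocalRing.maximalIdeal T) : IsLocalHom ψ := by
  refine ⟨fun a ha => ?_⟩
  have ha₀ : a ≠ 0 := by rintro rfl; simp at ha
  obtain ⟨n, u, rfl⟩ := eq_unit_mul_pow_irreducible ha₀ hϖ
  rcases n with _ | n
  · simp
  · rw [map_mul, map_pow] at ha
    exact absurd (isUnit_pow_succ_iff.mp (isUnit_of_mul_isUnit_right ha))
      ((IsLocalRing.mem_maximalIdeal _).mp hm)

theorem comap_eq_bot_of_map_irreducible_notMem (hϖ : Irreducible ϖ) {J : Ideal T} [J.IsPrime]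
    (hJ : ψ ϖ ∉ J) : J.comap ψ = ⊥ := by
  refine (Submodule.eq_bot_iff _).mpr fun a ha => by_contra fun ha₀ => ?_
  obtain ⟨n, u, rfl⟩ := eq_unit_mul_pow_irreducible ha₀ hϖ
  rw [Ideal.mem_comap, map_mul, map_pow] at ha
  rcases Ideal.IsPrime.mem_or_mem inferInstance ha with hu | hn
  · exact Ideal.IsPrime.ne_top inferInstance (Ideal.eq_top_of_isUnit_mem _ hu (u.isUnit.map ψ))
  · exact hJ (Ideal.IsPrime.mem_of_pow_mem inferInstance n hn)

end IsDiscreteValuationRing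

namespace RingHom

variable {A T : Type*} [CommRing A] [CommRing T]

theorem comap_range_subtype_eq_bot {ψ : A →+* T} {J : Ideal T} (hJ : J.comap ψ = ⊥) :
    J.comap ψ.range.subtype = ⊥ := by
  refine (Submodule.eq_bot_iff _).mpr ?_
  rintro ⟨_, a, rfl⟩ ha
  have : a = 0 := (Submodule.eq_bot_iff _).mp hJ a ha
  simp [this]

theorem rangeRestrict_injective {ψ : A →+* T} (hψ : Function.Injective ψ) :
    Function.Injective ψ.rangeRestrict :=
  fun _ _ h => hψ (congrArg Subtype.val h)

instance isLocalHom_range_subtype (ψ : A →+* T) [IsLocalHom ψ] : IsLocalHom ψ.range.subtype :=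
  ⟨by
    rintro ⟨_, a, rfl⟩ ha
    exact (isUnit_of_map_unit ψ a ha).map ψ.rangeRestrict⟩

end RingHom

open IsDiscreteValuationRing in
theorem isNSubring_range {A T : Type*} [CommRing A] [IsDomain A] [IsDiscreteValuationRing A]
    [Countable A] [CommRing T] [IsLocalRing T] {ψ : A →+* T} {ϖ : A} (hϖ : Irreducible ϖ)
    (hreg : ψ ϖ ∈ nonZeroDivisors T) (hm : ψ ϖ ∈ maximalIdeal T) : IsNSubring T ψ.range := by
  have := isLocalHom_of_map_irreducible_mem_maximalIdeal hϖ hm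
  let e : A ≃+* ψ.range := RingEquiv.ofBijective ψ.rangeRestrict
    ⟨RingHom.rangeRestrict_injective (injective_of_map_irreducible_mem_nonZeroDivisors hϖ hreg),
      ψ.rangeRestrict_surjective⟩
  have : IsDomain ψ.range := e.symm.injective.isDomain (e.symm : ψ.range →+* A)
  have : IsDiscreteValuationRing ψ.range := RingEquivClass.isDiscreteValuationRing e
  have : Countable ψ.range := ψ.rangeRestrict_surjective.countable
  refine ⟨inferInstance, ?_, ⟨inferInstance, inferInstance⟩,
    Cardinal.mk_le_max_aleph0_of_countable _ _, fun Q hQ => ?_, fun t _ J hJ q₀ q₁ _ _ => ?_⟩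
  · rw [maximalIdeal_comap]
    exact maximalIdeal.isMaximal _
  · have := hQ.isPrime
    exact ψ.comap_range_subtype_eq_bot (comap_eq_bot_of_map_irreducible_notMem hϖ
      (Ideal.notMem_of_mem_associatedPrimes_of_mem_nonZeroDivisors hQ hreg))
  · exact not_lt_lt_of_isPrime_of_ne_top (hJ.isPrime.comap _).ne_top

theorem exists_countable_field_hom_of_exists_isField {T : Type*} [CommRing T]
    (h : ∃ F : Subring T, IsField F) :
    ∃ (K : Type) (_ : Field K) (_ : Countable K), Nonempty (K →+* T) := by
  obtain ⟨F, hF⟩ := h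
  let := hF.toField
  have := ringChar.charP F
  rcases CharP.char_is_prime_or_zero F (ringChar F) with hp | hp
  · have : Fact (ringChar F).Prime := ⟨hp⟩
    exact ⟨ZMod (ringChar F), inferInstance, inferInstance,
      ⟨F.subtype.comp (ZMod.castHom dvd_rfl F)⟩⟩
  · have : CharP F 0 := hp ▸ ringChar.charP F
    have : CharZero F := CharP.charP_to_charZero F
    exact ⟨ℚ, inferInstance, inferInstance, ⟨F.subtype.comp (Rat.castHom F)⟩⟩

namespace Polynomial

variable {K T : Type*} [Field K] [CommRing T] [IsLocalRing T]

theorem isUnit_eval₂_of_coeff_zero_ne_zero (φ : K →+* T) {y : T} (hy : y ∈ maximalIdeal T)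
    {g : K[X]} (hg : g.coeff 0 ≠ 0) : IsUnit (g.eval₂ φ y) := by
  rw [← residue_ne_zero_iff_isUnit, hom_eval₂, (residue_eq_zero_iff y).mpr hy, eval₂_at_zero]
  exact (residue T).comp φ |>.injective.ne_iff' (map_zero _) |>.mpr hg

instance isPrime_span_X : (Ideal.span {X} : Ideal K[X]).IsPrime :=
  (Ideal.span_singleton_prime X_ne_zero).mpr prime_X

noncomputable def evalLocalizationAtX (φ : K →+* T) {y : T} (hy : y ∈ maximalIdeal T) :
    Localization.AtPrime (Ideal.span {X} : Ideal K[X]) →+* T :=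
  IsLocalization.lift (M := (Ideal.span {X}).primeCompl) (g := eval₂RingHom φ y) fun g =>
    isUnit_eval₂_of_coeff_zero_ne_zero φ hy
      (mt (Ideal.mem_span_singleton.mpr ∘ X_dvd_iff.mpr) g.2)

theorem evalLocalizationAtX_algebraMap (φ : K →+* T) {y : T} (hy : y ∈ maximalIdeal T)
    (f : K[X]) : evalLocalizationAtX φ hy (algebraMap K[X] _ f) = f.eval₂ φ y := by
  unfold evalLocalizationAtX
  exact IsLocalization.lift_eq _ f

end Polynomial

namespace Localization.AtPrime

variable (K : Type*) [Field K]

instance isDiscreteValuationRing_span_X :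
    IsDiscreteValuationRing (Localization.AtPrime (Ideal.span {X} : Ideal K[X])) :=
  IsLocalization.AtPrime.isDiscreteValuationRing_of_dedekind_domain K[X] (P := Ideal.span {X})
    (by simp [X_ne_zero]) _

theorem irreducible_algebraMap_X :
    Irreducible (algebraMap K[X] (Localization.AtPrime (Ideal.span {X} : Ideal K[X])) X) := by
  rw [IsDiscreteValuationRing.irreducible_iff_uniformizer, ← map_eq_maximalIdeal,
    Ideal.map_span, Set.image_singleton]

instance countable_span_X [Countable K] :
    Countable (Localization.AtPrime (Ideal.span {X} : Ideal K[X])) :=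
  have : Countable (AddMonoidAlgebra K ℕ) := .of_equiv _ AddMonoidAlgebra.coeffEquiv.symm
  have : Countable K[X] := toFinsupp_injective.countable
  (IsLocalization.mk'_surjective (Ideal.span {X} : Ideal K[X]).primeCompl).countable

end Localization.AtPrime

theorem exists_countable_NSubring_with_associate_general
    (T : Type*) [CommRing T] [IsLocalRing T]
    (hequi : ∃ F : Subring T, IsField F)
    (P : Ideal T) (hP : P.IsPrime)
    (y : T) (hyreg : y ∈ nonZeroDivisors T) (hym : y ∈ maximalIdeal T) (hyP : y ∉ P) :
    ∃ R : Subring T, IsNSubring T R ∧ Countable R ∧ Infinite R ∧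
      Ideal.comap R.subtype P = ⊥ ∧ ∃ t : Tˣ, y * (t : T) ∈ R := by
  obtain ⟨K, _, _, ⟨φ⟩⟩ := exists_countable_field_hom_of_exists_isField hequi
  let ψ := evalLocalizationAtX φ hym
  have hϖ := Localization.AtPrime.irreducible_algebraMap_X K
  have hψϖ : ψ (algebraMap K[X] _ X) = y := by
    rw [evalLocalizationAtX_algebraMap, eval₂_X]
  have hreg : ψ (algebraMap K[X] _ X) ∈ nonZeroDivisors T := hψϖ ▸ hyreg
  have hψ := IsDiscreteValuationRing.injective_of_map_irreducible_mem_nonZeroDivisors hϖ hreg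
  have := IsDiscreteValuationRing.infinite (Localization.AtPrime (Ideal.span {X} : Ideal K[X]))
  refine ⟨ψ.range, isNSubring_range hϖ hreg (hψϖ ▸ hym),
    ψ.rangeRestrict_surjective.countable,
    .of_injective _ (ψ.rangeRestrict_injective hψ),
    ψ.comap_range_subtype_eq_bot
      (IsDiscreteValuationRing.comap_eq_bot_of_map_irreducible_notMem hϖ (hψϖ ▸ hyP)),
    1, ?_⟩
  rw [Units.val_one, mul_one, ← hψϖ]
  exact ψ.mem_range_self _

/-- In an equicharacteristic complete local ring of depth at least one,
there is a countably infinite N-subring avoiding a given nonmaximal prime and containing an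
associate of a given regular element `y ∈ m \ p`. -/
theorem exists_countable_NSubring_with_associate
    (T : Type*) [CommRing T] [IsLocalRing T] [IsNoetherianRing T]
    [IsAdicComplete (maximalIdeal T) T]
    (hequi : ∃ F : Subring T, IsField F)
    (hdepth : DepthGE T 1)
    (P : Ideal T) (hP : P.IsPrime) (hPm : P ≠ maximalIdeal T)
    (y : T) (hyreg : y ∈ nonZeroDivisors T) (hym : y ∈ maximalIdeal T) (hyP : y ∉ P) :
    ∃ R : Subring T, IsNSubring T R ∧ Countable R ∧ Infinite R ∧
      Ideal.comap R.subtype P = ⊥ ∧ ∃ t : Tˣ, y * (t : T) ∈ R :=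
  exists_countable_NSubring_with_associate_general T hequi P hP y hyreg hym hyP
end
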